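/- Let n ≥ 4 be an even integer, k ≥ 2, 1 ≤ i < j ≤ k, let u, v ∈ {1,…,n}, and let (u_1,…,u_k) ∈ {1,…,n}^k with (u, v) ≠ (u_i, u_j). Then q_{ij}^{uv} lies strictly on the same side of the hyperplane H(u_1,…,u_k) as the origin: for every nonzero a ∈ ℝ^{2k} and b ∈ ℝ such that ⟨a, p_{m u_m}⟩ = b and ⟨a, p_{m ū_m}⟩ = b for all m ∈ {1,…,k}, one has b ≠ 0 and b·(⟨a, q_{ij}^{uv}⟩ − b) < 0. -/

import Mathlib

open scoped RealInnerProductSpace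
open Real

/-- The scaffolding point `p_{iu}` in `ℝ^{2k}`: its `i`-th coordinate pair is
`(cos((u−1)·2π/n), sin((u−1)·2π/n))` and its other coordinates are `0`. -/
noncomputable def scafPt (n k : ℕ) (i : Fin k) (u : ℕ) :
    EuclideanSpace ℝ (Fin (2 * k)) :=
  (WithLp.equiv 2 (Fin (2 * k) → ℝ)).symm fun idx =>
    if (idx : ℕ) = 2 * (i : ℕ) then Real.cos (((u : ℝ) - 1) * (2 * Real.pi) / n)
    else if (idx : ℕ) = 2 * (i : ℕ) + 1 then Real.sin (((u : ℝ) - 1) * (2 * Real.pi) / n)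
    else 0

/-- The scaffolding point set `P = {p_{iu} : 1 ≤ i ≤ k, 1 ≤ u ≤ n}`. -/
noncomputable def scafSet (n k : ℕ) : Set (EuclideanSpace ℝ (Fin (2 * k))) :=
  {x | ∃ i : Fin k, ∃ u ∈ Finset.Icc 1 n, x = scafPt n k i u}

/-- The antipodal partner `u' ∈ {1,…,n}` of `u ∈ {1,…,n}`: the unique element of
`{1,…,n}` congruent to `u + n/2` modulo `n`. -/
def antip (n u : ℕ) : ℕ := (u - 1 + n / 2) % n + 1

/-- The almost antipodal partner `ū ∈ {1,…,n}` of `u ∈ {1,…,n}`: the unique element of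
`{1,…,n}` congruent to `u + n/2 + 1` modulo `n`. -/
def almostAntip (n u : ℕ) : ℕ := (u - 1 + n / 2 + 1) % n + 1

/-- The half of the scaffolding set selected by a tuple `(u_1,…,u_k) ∈ {1,…,n}^k`:
`P(u_1,…,u_k) = {p_{it} : 1 ≤ i ≤ k, t ∈ {1,…,n}, t ≡ u_i − s (mod n)` for some
`s ∈ {0,…,n/2−1}}`. -/
noncomputable def scafHalf (n k : ℕ) (U : Fin k → ℕ) :
    Set (EuclideanSpace ℝ (Fin (2 * k))) :=
  {x | ∃ i : Fin k, ∃ t ∈ Finset.Icc 1 n,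
    (∃ s < n / 2, t + s ≡ U i [MOD n]) ∧ x = scafPt n k i t}

/-- The affine hyperplane `{x : ⟪a, x⟫ = b}`. -/
def hyp {k : ℕ} (a : EuclideanSpace ℝ (Fin (2 * k))) (b : ℝ) :
    Set (EuclideanSpace ℝ (Fin (2 * k))) := {x | ⟪a, x⟫ = b}

/-- The constraint point `q_{ij}^{uv}`: the centroid of `p_{iu}, p_{iū}, p_{jv}, p_{jv̄}`. -/
noncomputable def constrPt (n k : ℕ) (i j : Fin k) (u v : ℕ) :
    EuclideanSpace ℝ (Fin (2 * k)) :=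
  (1 / 4 : ℝ) • (scafPt n k i u + scafPt n k i (almostAntip n u)
    + scafPt n k j v + scafPt n k j (almostAntip n v))

/-! Restricted to the `m`-th coordinate pair, `x ↦ ⟪a, x⟫` is a sinusoid
`θ ↦ c₀ cos θ + c₁ sin θ` in the angle `θ` of the point on the circle. A sinusoid taking equal
values at two angles that are distinct modulo `2π` has vanishing derivative at their midpoint, so the
sum of its values at the two angles, both shifted by `δ`, is the unshifted sum times `cos δ`.
For the hyperplane through `p_{m u_m}` and `p_{m ū_m}` this gives
`⟪a, p_{mt}⟫ + ⟪a, p_{m t̄}⟫ = 2b cos(θ_t − θ_{u_m})`, hence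
`⟪a, q_{ij}^{uv}⟫ = b (cos(θ_u − θ_{u_i}) + cos(θ_v − θ_{u_j})) / 2`, and one of the two cosines
is `< 1`.
If `b` were `0`, each coordinate pair of `a` would be orthogonal to two linearly independent
vectors, forcing `a = 0`. -/

noncomputable def sinusoid (c₀ c₁ θ : ℝ) : ℝ := c₀ * cos θ + c₁ * sin θ

lemma sinusoid_add_int_mul_two_pi (c₀ c₁ θ : ℝ) (q : ℤ) :
    sinusoid c₀ c₁ (θ + q * (2 * π)) = sinusoid c₀ c₁ θ := by
  simp only [sinusoid, cos_add_int_mul_two_pi, sin_add_int_mul_two_pi]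

lemma sinusoid_add_sinusoid_of_eq {c₀ c₁ x y : ℝ} (hxy : sinusoid c₀ c₁ x = sinusoid c₀ c₁ y)
    (hs : sin ((y - x) / 2) ≠ 0) (δ : ℝ) :
    sinusoid c₀ c₁ (x + δ) + sinusoid c₀ c₁ (y + δ) =
      (sinusoid c₀ c₁ x + sinusoid c₀ c₁ y) * cos δ := by
  obtain ⟨m, h, rfl, rfl⟩ : ∃ m h, x = m - h ∧ y = m + h :=
    ⟨(x + y) / 2, (y - x) / 2, by ring, by ring⟩
  rw [show (m + h - (m - h)) / 2 = h by ring] at hs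
  simp only [sinusoid, cos_add, sin_add, cos_sub, sin_sub] at hxy ⊢
  -- the derivative of the sinusoid vanishes at the midpoint `m`
  have hderiv : c₁ * cos m - c₀ * sin m = 0 := by
    refine (mul_eq_zero.mp ?_).resolve_right hs
    linear_combination (-1 / 2 : ℝ) * hxy
  linear_combination 2 * cos h * sin δ * hderiv

lemma eq_zero_of_sinusoid_eq_zero {c₀ c₁ x y : ℝ} (hx : sinusoid c₀ c₁ x = 0)
    (hy : sinusoid c₀ c₁ y = 0) (hs : sin (y - x) ≠ 0) : c₀ = 0 ∧ c₁ = 0 := by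
  unfold sinusoid at hx hy
  rw [sin_sub] at hs
  constructor
  · refine (mul_eq_zero.mp ?_).resolve_right hs
    linear_combination sin y * hx - sin x * hy
  · refine (mul_eq_zero.mp ?_).resolve_right hs
    linear_combination cos x * hy - cos y * hx

def blockFst {k : ℕ} (m : Fin k) : Fin (2 * k) := ⟨2 * m, by omega⟩
def blockSnd {k : ℕ} (m : Fin k) : Fin (2 * k) := ⟨2 * m + 1, by omega⟩


lemma eq_zero_of_block_eq_zero {k : ℕ} {a : EuclideanSpace ℝ (Fin (2 * k))}
    (h : ∀ m : Fin k, a (blockFst m) = 0 ∧ a (blockSnd m) = 0) : a = 0 := by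
  ext idx
  obtain ⟨r, hr⟩ := Nat.even_or_odd' idx
  have hm : r < k := by omega
  rcases hr with hr | hr
  · rw [show idx = blockFst ⟨r, hm⟩ from Fin.ext hr]; exact (h _).1
  · rw [show idx = blockSnd ⟨r, hm⟩ from Fin.ext hr]; exact (h _).2

noncomputable def scafAngle (n t : ℕ) : ℝ := ((t : ℝ) - 1) * (2 * π) / n

lemma scafPt_eq (n k : ℕ) (m : Fin k) (t : ℕ) :
    scafPt n k m t = cos (scafAngle n t) • EuclideanSpace.single (blockFst m) 1
      + sin (scafAngle n t) • EuclideanSpace.single (blockSnd m) 1 := by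
  ext idx
  simp only [scafPt, WithLp.equiv_symm_apply, scafAngle, blockFst, blockSnd, PiLp.add_apply,
    PiLp.smul_apply, PiLp.single_apply, Fin.ext_iff, smul_eq_mul, mul_ite, mul_one, mul_zero]
  split_ifs <;> first | omega | simp

lemma inner_scafPt (n k : ℕ) (m : Fin k) (t : ℕ) (a : EuclideanSpace ℝ (Fin (2 * k))) :
    ⟪a, scafPt n k m t⟫ = sinusoid (a (blockFst m)) (a (blockSnd m)) (scafAngle n t) := by
  simp [scafPt_eq, inner_add_right, real_inner_smul_right, EuclideanSpace.inner_single_right,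
    sinusoid, mul_comm]

lemma scafAngle_almostAntip {n t : ℕ} (hn : Even n) (hn₀ : 0 < n) (ht : 1 ≤ t) :
    ∃ q : ℤ, scafAngle n (almostAntip n t) = scafAngle n t + (π + 2 * π / n) + q * (2 * π) := by
  obtain ⟨w, rfl⟩ := hn
  have hdiv : (t + w) % (w + w) + (w + w) * ((t + w) / (w + w)) = t + w := Nat.mod_add_div _ _
  generalize (t + w) / (w + w) = d at hdiv
  have hanti : almostAntip (w + w) t = t + w - (w + w) * d + 1 := by
    rw [almostAntip, show t - 1 + (w + w) / 2 + 1 = t + w by omega]; omega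
  have hanti' : (almostAntip (w + w) t : ℝ) = t + w - (w + w) * d + 1 := by
    rw [hanti, Nat.cast_add_one, Nat.cast_sub (by omega)]; push_cast; ring
  have hw : (w : ℝ) ≠ 0 := by exact_mod_cast (by omega : w ≠ 0)
  refine ⟨-d, ?_⟩
  rw [scafAngle, scafAngle, hanti']
  push_cast
  field_simp
  ring

lemma inner_scafPt_almostAntip {n k t : ℕ} (hn : Even n) (hn₀ : 0 < n) (ht : 1 ≤ t) (m : Fin k)
    (a : EuclideanSpace ℝ (Fin (2 * k))) :
    ⟪a, scafPt n k m (almostAntip n t)⟫ =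
      sinusoid (a (blockFst m)) (a (blockSnd m)) (scafAngle n t + (π + 2 * π / n)) := by
  obtain ⟨q, hq⟩ := scafAngle_almostAntip hn hn₀ ht
  rw [inner_scafPt, hq, sinusoid_add_int_mul_two_pi]

lemma sin_pi_add_two_pi_div_ne_zero {n : ℕ} (hn : 2 < n) : sin (π + 2 * π / n) ≠ 0 := by
  have hn' : (2 : ℝ) < n := by exact_mod_cast hn
  rw [add_comm, sin_add_pi, neg_ne_zero]
  refine (sin_pos_of_pos_of_lt_pi (by positivity) ?_).ne'
  rw [div_lt_iff₀ (by linarith)]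
  nlinarith [pi_pos]

lemma sin_half_pi_add_two_pi_div_ne_zero {n : ℕ} (hn : 2 < n) : sin ((π + 2 * π / n) / 2) ≠ 0 := by
  have hn' : (2 : ℝ) < n := by exact_mod_cast hn
  rw [show (π + 2 * π / n) / 2 = π / n + π / 2 by ring, sin_add_pi_div_two]
  have hpos : 0 < π / n := div_pos pi_pos (by linarith)
  refine (cos_pos_of_mem_Ioo ⟨by linarith [pi_pos], ?_⟩).ne'
  rw [div_lt_div_iff₀ (by linarith) two_pos]
  nlinarith [pi_pos]

section Block

variable {n k w : ℕ} {m : Fin k} {a : EuclideanSpace ℝ (Fin (2 * k))}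

lemma block_eq_zero_of_inner_scafPt_eq_zero (hn : 2 < n) (hneven : Even n) (hw : 1 ≤ w)
    (h₁ : ⟪a, scafPt n k m w⟫ = 0)
    (h₂ : ⟪a, scafPt n k m (almostAntip n w)⟫ = 0) :
    a (blockFst m) = 0 ∧ a (blockSnd m) = 0 := by
  rw [inner_scafPt] at h₁
  rw [inner_scafPt_almostAntip hneven (by omega) hw] at h₂
  exact eq_zero_of_sinusoid_eq_zero h₁ h₂ (by simpa using sin_pi_add_two_pi_div_ne_zero hn)

lemma inner_scafPt_add_inner_scafPt_almostAntip (hn : 2 < n) (hneven : Even n) (hw : 1 ≤ w)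
    {b : ℝ} (h₁ : ⟪a, scafPt n k m w⟫ = b)
    (h₂ : ⟪a, scafPt n k m (almostAntip n w)⟫ = b) {t : ℕ} (ht : 1 ≤ t) :
    ⟪a, scafPt n k m t⟫ + ⟪a, scafPt n k m (almostAntip n t)⟫ =
      2 * b * cos (scafAngle n t - scafAngle n w) := by
  rw [inner_scafPt] at h₁ ⊢
  rw [inner_scafPt_almostAntip hneven (by omega) hw] at h₂
  rw [inner_scafPt_almostAntip hneven (by omega) ht]
  have key := sinusoid_add_sinusoid_of_eq (h₁.trans h₂.symm)
    (by simpa using sin_half_pi_add_two_pi_div_ne_zero hn) (scafAngle n t - scafAngle n w)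
  rw [h₁, h₂] at key
  convert key using 3 <;> ring

end Block

lemma cos_scafAngle_sub_lt_one {n s w : ℕ} (hs : s ∈ Finset.Icc 1 n) (hw : w ∈ Finset.Icc 1 n)
    (hsw : s ≠ w) : cos (scafAngle n s - scafAngle n w) < 1 := by
  rw [Finset.mem_Icc] at hs hw
  have hn : (0 : ℝ) < n := by exact_mod_cast (by omega : 0 < n)
  have hratio : |((s : ℝ) - w) / n| < 1 := by
    rw [abs_div, Nat.abs_cast, div_lt_one hn, abs_sub_lt_iff]
    constructor <;> linarith [(by exact_mod_cast hs.1 : (1 : ℝ) ≤ s),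
      (by exact_mod_cast hs.2 : (s : ℝ) ≤ n), (by exact_mod_cast hw.1 : (1 : ℝ) ≤ w),
      (by exact_mod_cast hw.2 : (w : ℝ) ≤ n)]
  have hangle : scafAngle n s - scafAngle n w = ((s : ℝ) - w) / n * (2 * π) := by
    unfold scafAngle; ring
  obtain ⟨hlo, hhi⟩ := abs_lt.mp hratio
  refine (cos_le_one _).lt_of_ne fun h => hsw ?_
  rw [hangle, cos_eq_one_iff_of_lt_of_lt (by nlinarith [pi_pos]) (by nlinarith [pi_pos])] at h
  have : (s : ℝ) - w = 0 := by simpa [pi_ne_zero, hn.ne'] using h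
  exact_mod_cast sub_eq_zero.mp this

theorem constrPt_same_side_as_origin_general (n k : ℕ) (hn : 4 ≤ n) (hneven : Even n)
    (i j : Fin k) (u v : ℕ)
    (hu : u ∈ Finset.Icc 1 n) (hv : v ∈ Finset.Icc 1 n)
    (U : Fin k → ℕ) (hU : ∀ m, U m ∈ Finset.Icc 1 n)
    (huv : (u, v) ≠ (U i, U j))
    (a : EuclideanSpace ℝ (Fin (2 * k))) (ha : a ≠ 0) (b : ℝ)
    (hplane : ∀ m : Fin k, ⟪a, scafPt n k m (U m)⟫ = b ∧
      ⟪a, scafPt n k m (almostAntip n (U m))⟫ = b) :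
    b ≠ 0 ∧ b * (⟪a, constrPt n k i j u v⟫ - b) < 0 := by
  have hn₂ : 2 < n := by omega
  have hU₁ m : 1 ≤ U m := (Finset.mem_Icc.mp (hU m)).1
  have hb : b ≠ 0 := by
    rintro rfl
    exact ha <| eq_zero_of_block_eq_zero fun m =>
      block_eq_zero_of_inner_scafPt_eq_zero hn₂ hneven (hU₁ m) (hplane m).1 (hplane m).2
  have hpair m {t : ℕ} (ht : 1 ≤ t) := inner_scafPt_add_inner_scafPt_almostAntip hn₂ hneven
    (hU₁ m) (hplane m).1 (hplane m).2 ht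
  set cᵢ := cos (scafAngle n u - scafAngle n (U i))
  set cⱼ := cos (scafAngle n v - scafAngle n (U j))
  have hq : ⟪a, constrPt n k i j u v⟫ = b * (cᵢ + cⱼ) / 2 := by
    rw [constrPt, real_inner_smul_right, inner_add_right, inner_add_right, inner_add_right,
      add_assoc _ ⟪a, scafPt n k j v⟫, hpair i (Finset.mem_Icc.mp hu).1,
      hpair j (Finset.mem_Icc.mp hv).1]
    ring
  have hc : cᵢ + cⱼ < 2 := by
    have := cos_le_one (scafAngle n u - scafAngle n (U i))
    have := cos_le_one (scafAngle n v - scafAngle n (U j))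
    rcases not_and_or.mp (mt Prod.ext_iff.mpr huv) with h | h
    · linarith [cos_scafAngle_sub_lt_one hu (hU i) h]
    · linarith [cos_scafAngle_sub_lt_one hv (hU j) h]
  refine ⟨hb, ?_⟩
  rw [hq]
  nlinarith [mul_self_pos.mpr hb]

/-- If `(u, v) ≠ (u_i, u_j)`, the constraint point `q_{ij}^{uv}` lies strictly on the same
side of the hyperplane `H(u_1,…,u_k)` (through the points `p_{m u_m}, p_{m ū_m}`) as the
origin: for any equation `⟪a, ·⟫ = b` of that hyperplane, `b ≠ 0` and
`b·(⟪a, q_{ij}^{uv}⟫ − b) < 0`. -/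
theorem constrPt_same_side_as_origin (n k : ℕ) (hn : 4 ≤ n) (hneven : Even n)
    (hk : 2 ≤ k) (i j : Fin k) (hij : i < j) (u v : ℕ)
    (hu : u ∈ Finset.Icc 1 n) (hv : v ∈ Finset.Icc 1 n)
    (U : Fin k → ℕ) (hU : ∀ m, U m ∈ Finset.Icc 1 n)
    (huv : (u, v) ≠ (U i, U j))
    (a : EuclideanSpace ℝ (Fin (2 * k))) (ha : a ≠ 0) (b : ℝ)
    (hplane : ∀ m : Fin k, ⟪a, scafPt n k m (U m)⟫ = b ∧
      ⟪a, scafPt n k m (almostAntip n (U m))⟫ = b) :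
    b ≠ 0 ∧ b * (⟪a, constrPt n k i j u v⟫ - b) < 0 :=
  constrPt_same_side_as_origin_general n k hn hneven i j u v hu hv U hU huv a ha b hplane
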